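/- Let L = F_{2^{2k}} with k even, 3 ∤ k, and s an integer with gcd(s, 2k) = 1. Let ω ∈ L have multiplicative order 3. Then there exist nonzero β, γ ∈ L such that γ^{2^s+1} + ω β^{2^s+1} + 1 = 0 and γ^{2^k - 1} ≠ β^{2^k - 1}. -/

import Mathlib

/-!
Write `q = 2^k`, `K = {x ∈ L | x^q = x} ≅ 𝔽_q` and `Tr_m x = ∑_{i<m} x^(2^i)`. Since
`gcd(2^s + 1, q^2 - 1) = 3`, an element `z` is a `(2^s+1)`-th power as soon as its norm
`z^(q+1)` is a cube in `Kˣ`.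

Pick `c ∈ K` with `Tr_k(ω c^3) = 1`: otherwise, as `(a+1)^3 + a^3 + 1 = a^2 + a` and
`ω a^2 = (ω^2 a)^2`, every `a ∈ K` would satisfy `Tr_k a = Tr_k((ω^2 + ω) a) = 0`, which is
impossible because `Tr_{2k}` does not vanish on `L` and `Tr_{2k} x = Tr_k(x^q + x)`. With
`d = ω c^3`, Artin–Schreier gives `v ∈ L` with `v^2 + v = d^2`, and then `v^q = v + Tr_k(d) = v + 1`,
so `y = v/d` has norm `1` and trace `y^q + y = 1/d`. Hence `y` and `ω^2 (1 + y)` (of norm `c⁻³`)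
are `(2^s+1)`-th powers `γ^(2^s+1)`, `β^(2^s+1)`; they satisfy the equation because `ω^3 = 1`,
and `γ^(q-1) = β^(q-1)` would give `y^q (1 + y) = (1 + y^q) y`, i.e. `1/d = y^q + y = 0`.
-/

open Finset Polynomial

theorem Nat.two_pow_two_mul_sub_one (m : ℕ) : 2 ^ (2 * m) - 1 = (2 ^ m + 1) * (2 ^ m - 1) := by
  simpa [← pow_mul, mul_comm] using Nat.sq_sub_sq (2 ^ m) 1

theorem Nat.gcd_two_pow_two_mul_sub_one_two_pow_add_one {m s : ℕ} (h : s.Coprime (2 * m)) :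
    (2 ^ (2 * m) - 1).gcd (2 ^ s + 1) = 3 := by
  have hs : Odd s := (Nat.coprime_mul_iff_right.mp h).1.odd_of_right
  apply Nat.dvd_antisymm
  · calc (2 ^ (2 * m) - 1).gcd (2 ^ s + 1) ∣ (2 ^ (2 * m) - 1).gcd (2 ^ (2 * s) - 1) :=
          Nat.gcd_dvd_gcd_of_dvd_right _ ⟨2 ^ s - 1, Nat.two_pow_two_mul_sub_one s⟩
      _ = 3 := by
        rw [Nat.pow_sub_one_gcd_pow_sub_one, Nat.gcd_mul_left,
          (Nat.Coprime.coprime_dvd_right (dvd_mul_left m 2) h).symm, mul_one]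
        rfl
  · exact Nat.dvd_gcd (Nat.pow_sub_one_dvd_pow_sub_one 2 (dvd_mul_right 2 m))
      (by simpa using Odd.nat_add_dvd_pow_add_pow 2 1 hs)

theorem pow_two_pow_eq_self_of_orderOf_eq_three {M : Type*} [Monoid M] {ω : M}
    (hω : orderOf ω = 3) {k : ℕ} (hk : Even k) : ω ^ 2 ^ k = ω := by
  obtain ⟨e, he⟩ : 3 ∣ 2 ^ k - 1 := Nat.pow_sub_one_dvd_pow_sub_one 2 (even_iff_two_dvd.mp hk)
  rw [← Nat.sub_add_cancel Nat.one_le_two_pow, pow_succ, he, pow_mul, ← hω, pow_orderOf_eq_one,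
    one_pow, one_mul]

theorem IsPrimitiveRoot.sq_add_self_add_one {R : Type*} [CommRing R] [IsDomain R] {ω : R}
    (h : IsPrimitiveRoot ω 3) : ω ^ 2 + ω + 1 = 0 := by
  have := h.geom_sum_eq_zero (by norm_num)
  simp only [sum_range_succ, range_one, sum_singleton] at this
  linear_combination this

theorem pow_pow_mul_pow_eq_of_pow_sub_one_eq {M : Type*} [CommMonoid M] {a b : M} {q : ℕ}
    (hq : 0 < q) (h : a ^ (q - 1) = b ^ (q - 1)) (n : ℕ) :
    (a ^ n) ^ q * b ^ n = (b ^ n) ^ q * a ^ n := by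
  have : a ^ q * b = b ^ q * a := by
    rw [← Nat.sub_add_cancel hq, pow_succ, pow_succ, h, mul_right_comm]
  rw [pow_right_comm, pow_right_comm b, ← mul_pow, this, mul_pow]

theorem IsCyclic.exists_pow_eq_of_pow_eq_one {G : Type*} [CommGroup G] [IsCyclic G] [Finite G]
    {d : ℕ} {z : G} (hz : z ^ (Nat.card G / (Nat.card G).gcd d) = 1) : ∃ x, x ^ d = z := by
  set m := Nat.card G / (Nat.card G).gcd d
  have hm : m ∣ Nat.card G := Nat.div_dvd_of_dvd (Nat.gcd_dvd_left _ _)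
  have hle : (powMonoidHom d : G →* G).range ≤ (powMonoidHom m : G →* G).ker := by
    rintro _ ⟨x, rfl⟩
    obtain ⟨d', hd'⟩ := Nat.gcd_dvd_right (Nat.card G) d
    have hdm : d * m = Nat.card G * d' := by
      rw [hd', mul_comm _ d', mul_assoc, Nat.mul_div_cancel' (Nat.gcd_dvd_left _ _), mul_comm]
    show (x ^ d) ^ m = 1
    rw [← pow_mul, hdm, pow_mul, pow_card_eq_one', one_pow]
  have heq := Subgroup.eq_of_le_of_card_ge hle (by
    rw [IsCyclic.card_powMonoidHom_ker, IsCyclic.card_powMonoidHom_range, Nat.gcd_eq_right hm])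
  exact (heq ▸ (show z ∈ (powMonoidHom m : G →* G).ker from hz) : z ∈ _)

theorem FiniteField.exists_pow_eq_of_pow_eq_one {K : Type*} [Field K] [Fintype K] {d : ℕ} {z : K}
    (hz : z ^ ((Fintype.card K - 1) / (Fintype.card K - 1).gcd d) = 1) : ∃ x, x ^ d = z := by
  classical
  have hN : 0 < Fintype.card K - 1 := Nat.sub_pos_of_lt Fintype.one_lt_card
  have hz0 : z ≠ 0 := by
    rintro rfl
    rw [zero_pow (Nat.div_pos (Nat.gcd_le_left _ hN) (Nat.gcd_pos_of_pos_left _ hN)).ne'] at hz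
    exact zero_ne_one hz
  obtain ⟨x, hx⟩ := IsCyclic.exists_pow_eq_of_pow_eq_one (G := Kˣ) (z := Units.mk0 z hz0) <| by
    rw [Nat.card_eq_fintype_card, Fintype.card_units]
    exact Units.ext (by simpa using hz)
  exact ⟨x, by simpa using congrArg Units.val hx⟩

theorem exists_pow_two_pow_add_one_eq {F : Type*} [Field F] [Fintype F] {k s : ℕ}
    (hcard : Fintype.card F = 2 ^ (2 * k)) (hk : Even k) (hs : s.Coprime (2 * k)) {z w : F}
    (hw : w ^ 2 ^ k = w) (hw0 : w ≠ 0) (hz : z ^ (2 ^ k + 1) = w ^ 3) :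
    ∃ x, x ^ (2 ^ s + 1) = z := by
  obtain ⟨e, he⟩ : 3 ∣ 2 ^ k - 1 := Nat.pow_sub_one_dvd_pow_sub_one 2 (even_iff_two_dvd.mp hk)
  have hw1 : w ^ (2 ^ k - 1) = 1 := mul_right_cancel₀ hw0 <| by
    rw [← pow_succ, Nat.sub_add_cancel Nat.one_le_two_pow, hw, one_mul]
  have hN : 2 ^ (2 * k) - 1 = 3 * ((2 ^ k + 1) * e) := by
    rw [mul_left_comm, ← he, Nat.two_pow_two_mul_sub_one]
  refine FiniteField.exists_pow_eq_of_pow_eq_one ?_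
  rw [hcard, Nat.gcd_two_pow_two_mul_sub_one_two_pow_add_one hs, hN,
    Nat.mul_div_cancel_left _ three_pos, pow_mul, hz, ← pow_mul, ← he, hw1]

section FrobTrace

variable {R : Type*} [CommRing R] (m : ℕ)

/-- For `x ∈ 𝔽_{2^m}` this is the absolute trace of `x`. -/
def frobTrace (x : R) : R := ∑ i ∈ range m, x ^ 2 ^ i

variable {m} [CharP R 2]

omit [CharP R 2] in
theorem frobTrace_zero : frobTrace m (0 : R) = 0 := by
  simp [frobTrace]

theorem frobTrace_add (x y : R) : frobTrace m (x + y) = frobTrace m x + frobTrace m y := by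
  simp only [frobTrace, add_pow_char_pow, sum_add_distrib]

theorem frobTrace_two_mul (x : R) : frobTrace (2 * m) x = frobTrace m (x ^ 2 ^ m + x) := by
  rw [frobTrace_add, add_comm]
  simp only [frobTrace, two_mul, sum_range_add, ← pow_mul, ← pow_add]

theorem frobTrace_sq_add_self (x : R) : frobTrace m (x ^ 2 + x) = x ^ 2 ^ m + x := by
  induction m with
  | zero => simp [frobTrace, CharTwo.add_self_eq_zero]
  | succ m ih =>
    rw [frobTrace, sum_range_succ, ← frobTrace, ih, add_pow_char_pow, ← pow_mul, ← pow_succ']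
    linear_combination (x ^ 2 ^ m) * CharTwo.two_eq_zero (R := R)

theorem sq_frobTrace (x : R) : frobTrace m x ^ 2 = frobTrace m (x ^ 2) := by
  simp only [frobTrace, CharTwo.sum_sq, pow_right_comm x 2]

theorem frobTrace_sq_of_pow_eq {x : R} (hx : x ^ 2 ^ m = x) :
    frobTrace m (x ^ 2) = frobTrace m x := by
  have := frobTrace_add (m := m) (x ^ 2 + x) x
  rwa [add_assoc, CharTwo.add_self_eq_zero, add_zero, frobTrace_sq_add_self, hx,
    CharTwo.add_self_eq_zero, zero_add] at this

theorem frobTrace_eq_zero_or_one [IsDomain R] {x : R} (hx : x ^ 2 ^ m = x) :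
    frobTrace m x = 0 ∨ frobTrace m x = 1 :=
  eq_zero_or_one_of_sq_eq_self ((sq_frobTrace x).trans (frobTrace_sq_of_pow_eq hx))

theorem one_add_pow_two_pow_add_one_eq {y t : R} (hN : y ^ (2 ^ m + 1) = 1)
    (hT : y ^ 2 ^ m + y = t) : (1 + y) ^ (2 ^ m + 1) = t := by
  rw [pow_succ, add_pow_char_pow, one_pow]
  linear_combination hT + hN + CharTwo.two_eq_zero (R := R)

end FrobTrace

section FiniteFieldCharTwo

variable {F : Type*} [Field F] [Fintype F] {m : ℕ}

theorem card_frobTrace_eq_zero_le [DecidableEq F] (hm : 0 < m) :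
    #{x : F | frobTrace m x = 0} ≤ 2 ^ (m - 1) := by
  let P : F[X] := ∑ i ∈ range m, X ^ 2 ^ i
  have hP : P ≠ 0 := fun h0 => by
    have := congrArg (coeff · 1) h0
    simp [P, coeff_X_pow, eq_comm (a := 1), hm] at this
  have hdeg : P.natDegree ≤ 2 ^ (m - 1) := natDegree_sum_le_of_forall_le _ _ fun i hi => by
    rw [natDegree_X_pow]
    exact Nat.pow_le_pow_right two_pos (by rw [mem_range] at hi; omega)
  refine (card_le_degree_of_subset_roots fun x hx => ?_).trans hdeg
  rw [mem_roots hP, IsRoot, eval_finsetSum]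
  simpa [frobTrace] using (mem_filter.mp hx).2

theorem exists_frobTrace_ne_zero (hcard : Fintype.card F = 2 ^ m) (hm : 0 < m) :
    ∃ x : F, frobTrace m x ≠ 0 := by
  classical
  by_contra! h
  have := card_frobTrace_eq_zero_le (F := F) hm
  rw [filter_true_of_mem fun x _ => h x, card_univ, hcard] at this
  exact absurd this (not_le.mpr (Nat.pow_lt_pow_right one_lt_two (by omega)))

variable [CharP F 2]

theorem exists_sq_add_self_eq (hcard : Fintype.card F = 2 ^ m) (hm : 0 < m) {u : F}
    (hu : frobTrace m u = 0) : ∃ v, v ^ 2 + v = u := by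
  classical
  let f : F → F := fun v => v ^ 2 + v
  have hsub : univ.image f ⊆ ({x | frobTrace m x = 0} : Finset F) := by
    intro x hx
    obtain ⟨v, -, rfl⟩ := mem_image.mp hx
    rw [mem_filter, frobTrace_sq_add_self, ← hcard, FiniteField.pow_card,
      CharTwo.add_self_eq_zero]
    exact ⟨mem_univ _, rfl⟩
  have hfib : ∀ b ∈ univ.image f, #{a ∈ univ | f a = b} ≤ 2 := by
    intro b hb
    obtain ⟨v, -, rfl⟩ := mem_image.mp hb
    refine (card_le_card fun x hx => ?_).trans (card_le_two (a := v) (b := v + 1))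
    have h : (x + v) * (x + v + 1) = 0 := by
      linear_combination (mem_filter.mp hx).2 + (x * v + v ^ 2 + v) * CharTwo.two_eq_zero (R := F)
    rw [mem_insert, mem_singleton]
    rcases mul_eq_zero.mp h with h | h
    · left; linear_combination h - v * CharTwo.two_eq_zero (R := F)
    · right; linear_combination h - (v + 1) * CharTwo.two_eq_zero (R := F)
  have hcard_img : 2 ^ m ≤ 2 * #(univ.image f) := by
    simpa [hcard] using card_le_mul_card_image univ 2 hfib
  have heq := eq_of_subset_of_card_le hsub <| (card_frobTrace_eq_zero_le hm).trans <| by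
    rw [← Nat.pow_div (by omega) two_pos, pow_one]; omega
  obtain ⟨v, -, hv⟩ := mem_image.mp (heq ▸ mem_filter.mpr ⟨mem_univ u, hu⟩ : u ∈ univ.image f)
  exact ⟨v, hv⟩

theorem exists_frobTrace_mul_cube_eq_one {k : ℕ} (hcard : Fintype.card F = 2 ^ (2 * k))
    (hk : 0 < k) {ω : F} (hω : ω ^ 2 + ω + 1 = 0) (hωk : ω ^ 2 ^ k = ω) :
    ∃ c : F, c ^ 2 ^ k = c ∧ frobTrace k (ω * c ^ 3) = 1 := by
  have hfix : ∀ {x y : F}, x ^ 2 ^ k = x → y ^ 2 ^ k = y → (x * y) ^ 2 ^ k = x * y :=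
    fun hx hy => by rw [mul_pow, hx, hy]
  obtain ⟨x, hx⟩ := exists_frobTrace_ne_zero hcard (by omega : 0 < 2 * k)
  set a := x ^ 2 ^ k + x
  have ha : a ^ 2 ^ k = a := by
    rw [add_pow_char_pow, ← pow_mul, ← pow_add, ← two_mul, ← hcard, FiniteField.pow_card, add_comm]
  have ha1 : (a + 1) ^ 2 ^ k = a + 1 := by rw [add_pow_char_pow, ha, one_pow]
  have key : frobTrace k (ω * (a + 1) ^ 3) + frobTrace k (ω * a ^ 3) + frobTrace k (ω * 1 ^ 3)
      = frobTrace k a := by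
    calc _ = frobTrace k ((ω ^ 2 * a) ^ 2 + ω * a) := by
          rw [← frobTrace_add, ← frobTrace_add]
          congr 1
          linear_combination (ω * a ^ 3 + ω * a ^ 2 + ω * a + ω) * CharTwo.two_eq_zero (R := F)
            - ω * a ^ 2 * (ω - 1) * hω
      _ = frobTrace k ((ω ^ 2 + ω) * a) := by
          rw [frobTrace_add, frobTrace_sq_of_pow_eq (hfix (by rw [pow_right_comm, hωk]) ha),
            ← frobTrace_add, add_mul]
      _ = frobTrace k a := by
          congr 1
          linear_combination a * hω - a * CharTwo.two_eq_zero (R := F)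
  by_contra! h
  have hzero : ∀ {c : F}, c ^ 2 ^ k = c → frobTrace k (ω * c ^ 3) = 0 := fun hc =>
    (frobTrace_eq_zero_or_one (hfix hωk (by rw [pow_right_comm, hc]))).resolve_right (h _ hc)
  rw [hzero ha1, hzero ha, hzero (one_pow _), add_zero, add_zero] at key
  exact hx (frobTrace_two_mul x ▸ key.symm)

theorem exists_pow_two_pow_add_one_eq_one_and_add_self_eq_inv {k : ℕ}
    (hcard : Fintype.card F = 2 ^ (2 * k)) (hk : 0 < k) {d : F} (hd : d ^ 2 ^ k = d)
    (htr : frobTrace k d = 1) : ∃ y : F, y ^ (2 ^ k + 1) = 1 ∧ y ^ 2 ^ k + y = d⁻¹ := by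
  have hd0 : d ≠ 0 := by rintro rfl; simp [frobTrace_zero] at htr
  obtain ⟨v, hv⟩ := exists_sq_add_self_eq hcard (by omega) (u := d ^ 2) <| by
    rw [frobTrace_two_mul, pow_right_comm, hd, CharTwo.add_self_eq_zero, frobTrace_zero]
  have hvk : v ^ 2 ^ k = v + 1 := by
    have := frobTrace_sq_add_self (m := k) v
    rw [hv, frobTrace_sq_of_pow_eq hd, htr] at this
    linear_combination -this - v * CharTwo.two_eq_zero (R := F)
  refine ⟨v / d, ?_, ?_⟩
  · rw [pow_succ, div_pow, hd, hvk]
    field_simp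
    linear_combination hv
  · rw [div_pow, hd, hvk]
    field_simp
    linear_combination v * CharTwo.two_eq_zero (R := F)

end FiniteFieldCharTwo

theorem stmt10_general (F : Type*) [Field F] [Fintype F] (k s : ℕ) (hk : 0 < k)
    (hke : Even k)
    (hcard : Fintype.card F = 2 ^ (2 * k)) (hgcd : Nat.gcd s (2 * k) = 1)
    (ω : F) (hω : orderOf ω = 3) :
    ∃ β γ : F, β ≠ 0 ∧ γ ≠ 0 ∧
      γ ^ (2 ^ s + 1) + ω * β ^ (2 ^ s + 1) + 1 = 0 ∧
      γ ^ (2 ^ k - 1) ≠ β ^ (2 ^ k - 1) := by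
  have : CharP F 2 := charP_of_card_eq_prime_pow hcard
  have hprim : IsPrimitiveRoot ω 3 := hω ▸ IsPrimitiveRoot.orderOf ω
  have hωk : ω ^ 2 ^ k = ω := pow_two_pow_eq_self_of_orderOf_eq_three hω hke
  obtain ⟨c, hcK, hc⟩ := exists_frobTrace_mul_cube_eq_one hcard hk hprim.sq_add_self_add_one hωk
  have hc0 : c ≠ 0 := by rintro rfl; simp [frobTrace_zero] at hc
  obtain ⟨y, hyN, hyT⟩ := exists_pow_two_pow_add_one_eq_one_and_add_self_eq_inv hcard hk
    (by rw [mul_pow, hωk, pow_right_comm, hcK]) hc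
  have hz : (ω ^ 2 * (1 + y)) ^ (2 ^ k + 1) = c⁻¹ ^ 3 := by
    rw [mul_pow, pow_succ, pow_right_comm ω 2, hωk, one_add_pow_two_pow_add_one_eq hyN hyT]
    field_simp
    linear_combination hprim.pow_eq_one
  obtain ⟨γ, hγ⟩ := exists_pow_two_pow_add_one_eq hcard hke hgcd (one_pow _) one_ne_zero
    (hyN.trans (one_pow 3).symm)
  obtain ⟨β, hβ⟩ := exists_pow_two_pow_add_one_eq hcard hke hgcd (by rw [inv_pow, hcK])
    (inv_ne_zero hc0) hz
  refine ⟨β, γ, ?_, ?_, ?_, fun h => ?_⟩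
  · exact ne_zero_pow (by positivity) <|
      hβ ▸ ne_zero_pow (by positivity) (hz ▸ pow_ne_zero 3 (inv_ne_zero hc0))
  · exact ne_zero_pow (by positivity) <| hγ ▸ ne_zero_pow (by positivity) (hyN ▸ one_ne_zero)
  · rw [hγ, hβ]
    linear_combination (1 + y) * hprim.pow_eq_one + (1 + y) * CharTwo.two_eq_zero (R := F)
  · have := pow_pow_mul_pow_eq_of_pow_sub_one_eq (Nat.two_pow_pos k) h (2 ^ s + 1)
    rw [hγ, hβ, mul_pow _ (1 + y), pow_right_comm, hωk, add_pow_char_pow, one_pow] at this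
    have : ω ^ 2 * (y ^ 2 ^ k + y) = 0 := by
      linear_combination this + ω ^ 2 * y * CharTwo.two_eq_zero (R := F)
    simp [hyT, hprim.ne_zero, hc0] at this

/-- In `L = F_{2^{2k}}` with `k` even, `3 ∤ k`, `gcd(s,2k)=1`, and
`ω` of order 3, there exist nonzero `β, γ` with `γ^{2^s+1} + ω·β^{2^s+1} + 1 = 0`
and `γ^{2^k-1} ≠ β^{2^k-1}`. -/
theorem stmt10 (F : Type*) [Field F] [Fintype F] (k s : ℕ) (hk : 0 < k)
    (hke : Even k) (hk3 : ¬ 3 ∣ k)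
    (hcard : Fintype.card F = 2 ^ (2 * k)) (hgcd : Nat.gcd s (2 * k) = 1)
    (ω : F) (hω : orderOf ω = 3) :
    ∃ β γ : F, β ≠ 0 ∧ γ ≠ 0 ∧
      γ ^ (2 ^ s + 1) + ω * β ^ (2 ^ s + 1) + 1 = 0 ∧
      γ ^ (2 ^ k - 1) ≠ β ^ (2 ^ k - 1) :=
  stmt10_general F k s hk hke hcard hgcd ω hω
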